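/- For every s with 0 < s < 1/(2·log 2), lim_{N→∞} F_N(s) = 0 ≠ 2s. In particular, the sequence x_n := {log(2n−1)/log 2} does not have Poissonian pair correlations. -/
import Mathlib


open scoped Classical

/-- The sequence `x_n = {log(2n-1)/log 2}`. -/
noncomputable def xseq (n : ℕ) : ℝ := Int.fract (Real.log (2 * (n : ℝ) - 1) / Real.log 2)

/-- Distance of a real number to the nearest integer. -/
noncomputable def torusNorm (t : ℝ) : ℝ := |t - round t|

/-- The pair correlation function `F_N(s)`. -/
noncomputable def pcf (N : ℕ) (s : ℝ) : ℝ :=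
  (((Finset.Icc 1 N ×ˢ Finset.Icc 1 N).filter
      (fun p => p.1 ≠ p.2 ∧ torusNorm (xseq p.1 - xseq p.2) ≤ s / N)).card : ℝ) / N

lemma aux_exp (x : ℝ) : |Real.exp x - 1| ≤ |x| * Real.exp |x| := by
  rcases le_or_gt 0 x with h | h
  · rw [abs_of_nonneg h, abs_of_nonneg (by linarith [Real.one_le_exp h])]
    have h2 := Real.add_one_le_exp (-x)
    have h3 : Real.exp (-x) * Real.exp x = 1 := by rw [← Real.exp_add]; simp
    nlinarith [Real.exp_pos x]
  · rw [abs_of_neg h, abs_of_nonpos (by linarith [Real.exp_lt_one_iff.mpr h])]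
    have h2 := Real.add_one_le_exp x
    have h3 : (1:ℝ) ≤ Real.exp (-x) := Real.one_le_exp (by linarith)
    nlinarith

lemma pair_false (s : ℝ) (N k l : ℕ) (hs0 : 0 < s) (hs1 : s * Real.log 2 < 1/2)
    (hN : 1 ≤ N) (hbig : 2*s*Real.log 2 * Real.exp (2*(s*Real.log 2/N)) < 1)
    (hk : 1 ≤ k) (hkl : k < l) (hl : l ≤ N) (m : ℤ)
    (hm : |Real.log (2*(l:ℝ)-1)/Real.log 2 - Real.log (2*(k:ℝ)-1)/Real.log 2 - (m:ℝ)| ≤ s/N) :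
    False := by
  have hlog2 : 0 < Real.log 2 := Real.log_pos one_lt_two
  have hNR : (1:ℝ) ≤ (N:ℝ) := by exact_mod_cast hN
  have hNR0 : (0:ℝ) < (N:ℝ) := by linarith
  set A : ℝ := 2*(k:ℝ)-1 with hA
  set B : ℝ := 2*(l:ℝ)-1 with hB
  have hkR : (1:ℝ) ≤ (k:ℝ) := by exact_mod_cast hk
  have hklR : (k:ℝ) < (l:ℝ) := by exact_mod_cast hkl
  have hlR : (l:ℝ) ≤ (N:ℝ) := by exact_mod_cast hl
  have hA1 : (1:ℝ) ≤ A := by rw [hA]; linarith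
  have hB2N : B ≤ 2*(N:ℝ) := by rw [hB]; linarith
  have hAB : A < B := by rw [hA, hB]; linarith
  have hA0 : (0:ℝ) < A := by linarith
  have hB0 : (0:ℝ) < B := by linarith
  set ε : ℝ := s * Real.log 2 / N with hε
  have hε0 : 0 < ε := by positivity
  have hεle : ε ≤ s * Real.log 2 := by
    rw [hε]; exact div_le_self (by positivity) hNR
  have hNε : (N:ℝ) * ε = s * Real.log 2 := by rw [hε]; field_simp
  have hε2 : ε + ε = 2*(s*Real.log 2/(N:ℝ)) := by rw [hε]; ring
  set x : ℝ := Real.log B - Real.log A - m * Real.log 2 with hx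
  have hxε : |x| ≤ ε := by
    have heq : x = (Real.log B / Real.log 2 - Real.log A / Real.log 2 - m) * Real.log 2 := by
      rw [hx]; field_simp
    have heps : ε = (s/N) * Real.log 2 := by rw [hε]; ring
    rw [heq, abs_mul, abs_of_pos hlog2, heps]
    exact mul_le_mul_of_nonneg_right hm hlog2.le
  have hDpos : 0 < Real.log B - Real.log A := sub_pos.mpr (Real.log_lt_log hA0 hAB)
  have hm0 : 0 ≤ m := by
    by_contra hneg
    push_neg at hneg
    have hm1 : m ≤ -1 := by omega
    have hm1R : (m:ℝ) ≤ -1 := by exact_mod_cast hm1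
    have hxge : x ≥ Real.log 2 := by rw [hx]; nlinarith
    have := (abs_le.mp hxε).2
    have hl2 : (0.6931471803:ℝ) < Real.log 2 := Real.log_two_gt_d9
    linarith
  lift m to ℕ using hm0 with M
  have hBe : B = A * 2^M * Real.exp x := by
    have hlogeq : Real.log B = Real.log A + (M:ℝ)*Real.log 2 + x := by
      rw [hx]; push_cast; ring
    calc B = Real.exp (Real.log B) := (Real.exp_log hB0).symm
      _ = Real.exp (Real.log A) * Real.exp ((M:ℝ)*Real.log 2) * Real.exp x := by
          rw [hlogeq, Real.exp_add, Real.exp_add]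
      _ = A * 2^M * Real.exp x := by
          rw [Real.exp_log hA0, Real.exp_nat_mul, Real.exp_log two_pos]
  have h2MA : (0:ℝ) < A * 2^M := by positivity
  have hmono : Real.exp |x| ≤ Real.exp ε := Real.exp_le_exp.mpr hxε
  have hAM : A * 2^M ≤ 2*(N:ℝ) * Real.exp ε := by
    have h1 : A * 2^M = B * Real.exp (-x) := by
      rw [hBe, Real.exp_neg]
      field_simp
    have h2 : Real.exp (-x) ≤ Real.exp ε :=
      Real.exp_le_exp.mpr (by cases abs_le.mp hxε with | intro h1 h2 => linarith)
    rw [h1]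
    exact mul_le_mul hB2N h2 (Real.exp_pos _).le (by linarith)
  have hbound : |B - A * 2^M| ≤ 2*s*Real.log 2 * Real.exp (2*(s*Real.log 2/N)) := by
    have h1 : |B - A * 2^M| = A * 2^M * |Real.exp x - 1| := by
      rw [hBe, show A * 2^M * Real.exp x - A * 2^M = A * 2^M * (Real.exp x - 1) by ring,
        abs_mul, abs_of_pos h2MA]
    have h2 : |Real.exp x - 1| ≤ ε * Real.exp ε :=
      le_trans (aux_exp x) (mul_le_mul hxε hmono (Real.exp_pos _).le hε0.le)
    calc |B - A * 2^M| = A * 2^M * |Real.exp x - 1| := h1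
      _ ≤ (2*(N:ℝ) * Real.exp ε) * (ε * Real.exp ε) := by
          apply mul_le_mul hAM h2 (abs_nonneg _) (by positivity)
      _ = 2*((N:ℝ)*ε) * Real.exp (ε + ε) := by rw [Real.exp_add]; ring
      _ = 2*s*Real.log 2 * Real.exp (2*(s*Real.log 2/N)) := by rw [hNε, hε2]; ring
  have hlt1 : |B - A * 2^M| < 1 := lt_of_le_of_lt hbound hbig
  have hAa : A = ((2*k-1 : ℕ):ℝ) := by
    have h1 : (1:ℕ) ≤ 2*k := by omega
    show 2*(k:ℝ)-1 = ((2*k-1 : ℕ):ℝ)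
    push_cast [Nat.cast_sub h1]
    ring
  have hBb : B = ((2*l-1 : ℕ):ℝ) := by
    have h1 : (1:ℕ) ≤ 2*l := by omega
    show 2*(l:ℝ)-1 = ((2*l-1 : ℕ):ℝ)
    push_cast [Nat.cast_sub h1]
    ring
  have hint : (((2*l-1:ℕ):ℤ) - 2^M * ((2*k-1:ℕ):ℤ) : ℤ) = 0 := by
    have h1 : |(((2*l-1:ℕ):ℤ) - 2^M * ((2*k-1:ℕ):ℤ) : ℤ)| < 1 := by
      have h2 : |((((2*l-1:ℕ):ℤ) - 2^M * ((2*k-1:ℕ):ℤ) : ℤ) : ℝ)| < 1 := by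
        push_cast
        rw [show ((2*l-1:ℕ):ℝ) - 2^M * ((2*k-1:ℕ):ℝ) = B - A * 2^M by
          rw [hAa, hBb]; ring]
        exact hlt1
      exact_mod_cast h2
    rcases abs_lt.mp h1 with ⟨ha2, hb2⟩
    omega
  have hbeq : (2*l-1 : ℕ) = 2^M * (2*k-1) := by
    have h1 : ((2*l-1:ℕ):ℤ) = 2^M * ((2*k-1:ℕ):ℤ) := by omega
    exact_mod_cast h1
  rcases Nat.eq_zero_or_pos M with hM | hM
  · rw [hM] at hbeq
    simp at hbeq
    omega
  · have hdvd : 2 ∣ (2*l-1:ℕ) := by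
      rw [hbeq]
      exact Dvd.dvd.mul_right (dvd_pow_self 2 (by omega)) _
    omega

lemma exists_int_approx (k l : ℕ) (c : ℝ)
    (h : torusNorm (xseq k - xseq l) ≤ c) :
    ∃ m : ℤ, |Real.log (2*(l:ℝ)-1)/Real.log 2 - Real.log (2*(k:ℝ)-1)/Real.log 2 - (m:ℝ)| ≤ c := by
  set u := Real.log (2*(k:ℝ)-1)/Real.log 2 with hu
  set v := Real.log (2*(l:ℝ)-1)/Real.log 2 with hv
  set t := xseq k - xseq l with ht
  refine ⟨-(⌊u⌋ - ⌊v⌋) - round t, ?_⟩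
  have hteq : t = (u - ⌊u⌋) - (v - ⌊v⌋) := by
    rw [ht]; unfold xseq; rw [Int.fract, Int.fract, hu, hv]
  rw [torusNorm] at h
  have heq : v - u - ((-(⌊u⌋ - ⌊v⌋) - round t : ℤ) : ℝ) = -(t - round t) := by
    rw [hteq]; push_cast; ring
  rw [heq, abs_neg]
  exact h

lemma pcf_eventually_zero (s : ℝ) (hs0 : 0 < s) (hs : s < 1 / (2 * Real.log 2)) :
    ∀ᶠ N : ℕ in Filter.atTop, pcf N s = 0 := by
  have hlog2 : 0 < Real.log 2 := Real.log_pos one_lt_two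
  have h2s : 2 * s * Real.log 2 < 1 := by
    have := (lt_div_iff₀ (by positivity)).mp hs
    linarith
  have hs1 : s * Real.log 2 < 1/2 := by linarith
  have htend : Filter.Tendsto
      (fun N : ℕ => 2*s*Real.log 2 * Real.exp (2*(s*Real.log 2/N)))
      Filter.atTop (nhds (2*s*Real.log 2)) := by
    have h1 : Filter.Tendsto (fun N : ℕ => 2*(s*Real.log 2/(N:ℝ))) Filter.atTop (nhds 0) := by
      have := (tendsto_const_div_atTop_nhds_zero_nat (s*Real.log 2)).const_mul 2
      simpa using this
    have h2 := (Real.continuous_exp.tendsto 0).comp h1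
    simp only [Function.comp, Real.exp_zero] at h2
    have h3 := h2.const_mul (2*s*Real.log 2)
    simpa using h3
  have hev : ∀ᶠ N : ℕ in Filter.atTop,
      2*s*Real.log 2 * Real.exp (2*(s*Real.log 2/N)) < 1 :=
    htend.eventually_lt_const h2s
  filter_upwards [hev, Filter.eventually_ge_atTop 1] with N hbig hN
  have hempty : ((Finset.Icc 1 N ×ˢ Finset.Icc 1 N).filter
      (fun p => p.1 ≠ p.2 ∧ torusNorm (xseq p.1 - xseq p.2) ≤ s / N)) = ∅ := by
    rw [Finset.filter_eq_empty_iff]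
    rintro ⟨k, l⟩ hp ⟨hne, hnear⟩
    rw [Finset.mem_product, Finset.mem_Icc, Finset.mem_Icc] at hp
    obtain ⟨⟨hk1, hkN⟩, hl1, hlN⟩ := hp
    rcases lt_or_gt_of_ne hne with hkl | hlk
    · obtain ⟨m, hm⟩ := exists_int_approx k l (s/N) hnear
      exact pair_false s N k l hs0 hs1 hN hbig hk1 hkl hlN m hm
    · obtain ⟨m, hm⟩ := exists_int_approx k l (s/N) hnear
      refine pair_false s N l k hs0 hs1 hN hbig hl1 hlk hkN (-m) ?_
      have heq : Real.log (2*(k:ℝ)-1)/Real.log 2 - Real.log (2*(l:ℝ)-1)/Real.log 2 - ((-m : ℤ):ℝ)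
          = -(Real.log (2*(l:ℝ)-1)/Real.log 2 - Real.log (2*(k:ℝ)-1)/Real.log 2 - (m:ℝ)) := by
        push_cast; ring
      rw [heq, abs_neg]
      exact hm
  unfold pcf
  rw [hempty]
  simp

theorem not_poissonian :
    (∀ s : ℝ, 0 < s → s < 1 / (2 * Real.log 2) →
      Filter.Tendsto (fun N : ℕ => pcf N s) Filter.atTop (nhds 0) ∧ (0 : ℝ) ≠ 2 * s) ∧
    ¬ (∀ s : ℝ, 0 ≤ s →
      Filter.Tendsto (fun N : ℕ => pcf N s) Filter.atTop (nhds (2 * s))) := by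
  have key : ∀ s : ℝ, 0 < s → s < 1 / (2 * Real.log 2) →
      Filter.Tendsto (fun N : ℕ => pcf N s) Filter.atTop (nhds 0) := by
    intro s hs0 hs
    have hev := pcf_eventually_zero s hs0 hs
    exact Filter.Tendsto.congr' (hev.mono fun N h => h.symm) tendsto_const_nhds
  constructor
  · intro s hs0 hs
    exact ⟨key s hs0 hs, ne_of_lt (by linarith)⟩
  · intro hcontra
    have hhalf : (1/2 : ℝ) < 1 / (2 * Real.log 2) := by
      have hlt : 2 * Real.log 2 < 2 := by nlinarith [Real.log_two_lt_d9]
      have hpos : (0:ℝ) < 2 * Real.log 2 := by positivity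
      exact one_div_lt_one_div_of_lt hpos hlt
    have h0 := key (1/2) (by norm_num) hhalf
    have h1 := hcontra (1/2) (by norm_num)
    have := tendsto_nhds_unique h0 h1
    norm_num at this
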